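/- arXiv:1909.00854 — 2 statements merged into one kernel-verified Lean document; each statement's English description precedes it below -/
import Mathlib

section
/- The Euler product identity over monic irreducible polynomials: sum over Q monic irreducible of 2 deg(Q) / (|Q|^2 - 1) = 2/(q - 1), where |Q| = q^{deg Q}. -/
open Polynomial

namespace EPaux

open scoped Classical
open UniqueFactorizationMonoid Finset

variable {Fq : Type} [Field Fq] [Fintype Fq]

/-- Polynomials of bounded degree form a finite set. -/
lemma finite_degLE (m : ℕ) : {p : Fq[X] | p.natDegree ≤ m}.Finite := by
  have h1 : Finite (Polynomial.degreeLT Fq (m + 1)) :=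
    Finite.of_equiv _ (Polynomial.degreeLTEquiv Fq (m + 1)).symm.toEquiv
  have h2 : ((Polynomial.degreeLT Fq (m + 1) : Submodule Fq Fq[X]) : Set Fq[X]).Finite :=
    Set.toFinite _
  refine h2.subset fun p hp => ?_
  simp only [SetLike.mem_coe, Polynomial.mem_degreeLT]
  calc (p.degree : WithBot ℕ) ≤ (p.natDegree : WithBot ℕ) := Polynomial.degree_le_natDegree
    _ < ((m + 1 : ℕ) : WithBot ℕ) := by
        exact_mod_cast Nat.lt_succ_of_le hp

noncomputable def monEquiv (n : ℕ) :
    {p : Fq[X] // p.Monic ∧ p.natDegree = n} ≃ (Fin n → Fq) :=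
  (Polynomial.monicEquivDegreeLT n).trans (Polynomial.degreeLTEquiv Fq n).toEquiv

noncomputable instance (n : ℕ) : Fintype {p : Fq[X] // p.Monic ∧ p.natDegree = n} :=
  Fintype.ofEquiv _ (monEquiv n).symm

/-- The finset of monic polynomials of degree `n`. -/
noncomputable def mon (n : ℕ) : Finset Fq[X] :=
  (Finset.univ : Finset {p : Fq[X] // p.Monic ∧ p.natDegree = n}).map
    (Function.Embedding.subtype _)

lemma mem_mon {n : ℕ} {f : Fq[X]} : f ∈ (mon n : Finset Fq[X]) ↔ f.Monic ∧ f.natDegree = n := by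
  simp [mon]

lemma card_mon (n : ℕ) : (mon (Fq := Fq) n).card = Fintype.card Fq ^ n := by
  rw [mon, Finset.card_map, Finset.card_univ, Fintype.card_congr (monEquiv n)]
  simp [Fintype.card_fun]

/-- Pairs `(Q, k)` with `Q` monic irreducible, `k ≥ 1`, `k * deg Q ≤ m`. -/
def Qset (m : ℕ) : Set (Fq[X] × ℕ) :=
  {x | x.1.Monic ∧ Irreducible x.1 ∧ 1 ≤ x.2 ∧ x.2 * x.1.natDegree ≤ m}

/-- Pairs `(Q, k)` with `Q` monic irreducible, `k ≥ 1`, `k * deg Q = m`. -/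
def Eset (m : ℕ) : Set (Fq[X] × ℕ) :=
  {x | x.1.Monic ∧ Irreducible x.1 ∧ 1 ≤ x.2 ∧ x.2 * x.1.natDegree = m}

/-- Pairs `(Q, k)` with `Q` monic irreducible, `k ≥ 1`, `Q ^ k ∣ f`. -/
def Dset (f : Fq[X]) : Set (Fq[X] × ℕ) :=
  {x | x.1.Monic ∧ Irreducible x.1 ∧ 1 ≤ x.2 ∧ x.1 ^ x.2 ∣ f}

lemma finite_Qset (m : ℕ) : (Qset (Fq := Fq) m).Finite := by
  refine (Set.Finite.prod (finite_degLE m) (Set.finite_Iic m)).subset ?_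
  rintro ⟨Q, k⟩ ⟨hm, hi, hk, hle⟩
  have hd : 1 ≤ Q.natDegree := hi.natDegree_pos
  constructor
  · exact le_trans (Nat.le_mul_of_pos_left _ hk) hle
  · exact Set.mem_Iic.mpr (le_trans (Nat.le_mul_of_pos_right _ hd) hle)

lemma finite_Eset (m : ℕ) : (Eset (Fq := Fq) m).Finite :=
  (finite_Qset m).subset fun x ⟨h1, h2, h3, h4⟩ => ⟨h1, h2, h3, h4.le⟩

lemma Dset_subset_Qset {f : Fq[X]} (hf : f.Monic) :
    Dset f ⊆ Qset (Fq := Fq) f.natDegree := by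
  rintro ⟨Q, k⟩ ⟨hm, hi, hk, hdvd⟩
  refine ⟨hm, hi, hk, ?_⟩
  have := Polynomial.natDegree_le_of_dvd hdvd hf.ne_zero
  rwa [Polynomial.natDegree_pow] at this

lemma finite_Dset {f : Fq[X]} (hf : f.Monic) : (Dset (Fq := Fq) f).Finite :=
  (finite_Qset f.natDegree).subset (Dset_subset_Qset hf)

/-- `a m` is the sum of `deg Q` over pairs `(Q,k)` with `k * deg Q = m`. -/
noncomputable def a (Fq : Type) [Field Fq] [Fintype Fq] (m : ℕ) : ℕ :=
  ∑ x ∈ (finite_Eset (Fq := Fq) m).toFinset, x.1.natDegree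

lemma a_zero : a Fq 0 = 0 := by
  rw [a, Finset.sum_eq_zero_iff]
  intro x hx
  rw [Set.Finite.mem_toFinset] at hx
  obtain ⟨hm, hi, hk, heq⟩ := hx
  have hd : 1 ≤ x.1.natDegree := hi.natDegree_pos
  rcases Nat.mul_eq_zero.mp heq with h | h <;> omega

/-- Sublemma A: the sum of `deg Q` over prime power divisors `Q^k ∣ f` equals `deg f`. -/
lemma sum_Dset {f : Fq[X]} (hf : f.Monic) :
    ∑ x ∈ (finite_Dset hf).toFinset, x.1.natDegree = f.natDegree := by
  classical
  have hmem : ∀ x : Fq[X] × ℕ, x ∈ (finite_Dset hf).toFinset ↔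
      x.1 ∈ (normalizedFactors f).toFinset ∧ x.2 ∈ Finset.Icc 1 ((normalizedFactors f).count x.1) := by
    rintro ⟨Q, k⟩
    rw [Set.Finite.mem_toFinset]
    constructor
    · rintro ⟨hm, hi, hk, hdvd⟩
      have hcount : emultiplicity Q f = ((normalizedFactors f).count Q : ℕ∞) := by
        rw [emultiplicity_eq_count_normalizedFactors hi hf.ne_zero,
          hm.normalize_eq_self]
      have hle : (k : ℕ∞) ≤ ((normalizedFactors f).count Q : ℕ∞) := by
        rw [← hcount]
        exact pow_dvd_iff_le_emultiplicity.mp hdvd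
      have hle' : k ≤ (normalizedFactors f).count Q := by exact_mod_cast hle
      refine ⟨Multiset.mem_toFinset.mpr (Multiset.count_pos.mp ?_), Finset.mem_Icc.mpr ⟨hk, hle'⟩⟩
      exact lt_of_lt_of_le hk hle'
    · rintro ⟨hQ, hk⟩
      rw [Multiset.mem_toFinset] at hQ
      rw [Finset.mem_Icc] at hk
      have hi : Irreducible Q := irreducible_of_normalized_factor Q hQ
      have hm : Q.Monic := by
        have := normalize_normalized_factor Q hQ
        have h2 := Polynomial.monic_normalize (p := Q) hi.ne_zero
        rwa [this] at h2
      refine ⟨hm, hi, hk.1, ?_⟩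
      rw [pow_dvd_iff_le_emultiplicity, emultiplicity_eq_count_normalizedFactors hi hf.ne_zero,
        hm.normalize_eq_self]
      exact_mod_cast hk.2
  have hset : (finite_Dset hf).toFinset =
      (normalizedFactors f).toFinset.biUnion (fun Q => (Finset.Icc 1 ((normalizedFactors f).count Q)).image fun k => (Q, k)) := by
    ext x
    rw [hmem, Finset.mem_biUnion]
    constructor
    · rintro ⟨h1, h2⟩
      exact ⟨x.1, h1, Finset.mem_image.mpr ⟨x.2, h2, rfl⟩⟩
    · rintro ⟨Q, hQ, hx⟩
      rw [Finset.mem_image] at hx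
      obtain ⟨k, hk, rfl⟩ := hx
      exact ⟨hQ, hk⟩
  rw [hset, Finset.sum_biUnion]
  · have : ∀ Q ∈ (normalizedFactors f).toFinset,
        ∑ x ∈ (Finset.Icc 1 ((normalizedFactors f).count Q)).image (fun k => (Q, k)), x.1.natDegree
          = (normalizedFactors f).count Q * Q.natDegree := by
      intro Q hQ
      rw [Finset.sum_image (by intro a _ b _ h; exact (Prod.mk.injEq _ _ _ _).mp h |>.2)]
      simp [Nat.card_Icc, mul_comm]
    rw [Finset.sum_congr rfl this]
    -- now `∑ Q in (normalizedFactors f).toFinset, (normalizedFactors f).count Q * Q.natDegree = f.natDegree`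
    have hprod : (normalizedFactors f).prod = f := by
      refine Polynomial.eq_of_monic_of_associated ?_ hf (prod_normalizedFactors hf.ne_zero)
      refine Polynomial.monic_multiset_prod_of_monic _ _ fun Q hQ => ?_
      exact Polynomial.monic_normalize (irreducible_of_factor Q hQ).ne_zero
    have hdeg : f.natDegree = ((normalizedFactors f).map Polynomial.natDegree).sum := by
      conv_lhs => rw [← hprod]
      rw [Polynomial.natDegree_multiset_prod]
      exact zero_notMem_normalizedFactors f
    rw [hdeg, Finset.sum_multiset_map_count]
    simp [smul_eq_mul]
  · intro Q1 h1 Q2 h2 hne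
    simp only [Finset.disjoint_left, Finset.mem_image]
    rintro x ⟨k1, _, rfl⟩ ⟨k2, _, h⟩
    exact hne (by simpa using congrArg Prod.fst h.symm)

/-- Sublemma B: the number of monic degree-`m` multiples of a monic `g` is `q ^ (m - deg g)`. -/
lemma card_multiples {g : Fq[X]} (hg : g.Monic) {m : ℕ} (hm : g.natDegree ≤ m) :
    ((mon m).filter (fun f => g ∣ f)).card = Fintype.card Fq ^ (m - g.natDegree) := by
  classical
  rw [← card_mon (Fq := Fq) (m - g.natDegree)]
  refine (Finset.card_bij (fun h _ => g * h) ?_ ?_ ?_).symm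
  · intro h hh
    rw [mem_mon] at hh
    rw [Finset.mem_filter, mem_mon]
    refine ⟨⟨hg.mul hh.1, ?_⟩, Dvd.intro _ rfl⟩
    rw [Polynomial.natDegree_mul hg.ne_zero hh.1.ne_zero, hh.2]
    omega
  · intro h1 hh1 h2 hh2 heq
    exact mul_left_cancel₀ hg.ne_zero heq
  · intro f hf
    rw [Finset.mem_filter, mem_mon] at hf
    obtain ⟨⟨hfm, hfd⟩, c, rfl⟩ := hf
    have hc : c.Monic := hg.of_mul_monic_left hfm
    refine ⟨c, ?_, rfl⟩
    rw [mem_mon]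
    refine ⟨hc, ?_⟩
    rw [Polynomial.natDegree_mul hg.ne_zero hc.ne_zero] at hfd
    omega

/-- The double-counting identity. -/
lemma key (m : ℕ) :
    m * Fintype.card Fq ^ m = ∑ x ∈ (finite_Qset (Fq := Fq) m).toFinset,
      x.1.natDegree * Fintype.card Fq ^ (m - x.2 * x.1.natDegree) := by
  classical
  have lhs : ∑ f ∈ (mon (Fq := Fq) m), f.natDegree = m * Fintype.card Fq ^ m := by
    rw [Finset.sum_congr rfl (fun f hf => (mem_mon.mp hf).2), Finset.sum_const, card_mon,
      smul_eq_mul, mul_comm]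
  rw [← lhs]
  have swap : ∑ f ∈ (mon (Fq := Fq) m),
      ∑ x ∈ (finite_Qset (Fq := Fq) m).toFinset.filter (fun x => x.1 ^ x.2 ∣ f),
        x.1.natDegree
      = ∑ x ∈ (finite_Qset (Fq := Fq) m).toFinset,
        ∑ _f ∈ (mon (Fq := Fq) m).filter (fun f => x.1 ^ x.2 ∣ f), x.1.natDegree := by
    refine Finset.sum_comm' ?_
    intro f x
    simp only [Finset.mem_filter]
    tauto
  have perf : ∀ f ∈ (mon (Fq := Fq) m),
      ∑ x ∈ (finite_Qset (Fq := Fq) m).toFinset.filter (fun x => x.1 ^ x.2 ∣ f),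
        x.1.natDegree = f.natDegree := by
    intro f hf
    rw [mem_mon] at hf
    obtain ⟨hfm, hfd⟩ := hf
    rw [← sum_Dset hfm]
    congr 1
    ext x
    rw [Finset.mem_filter, Set.Finite.mem_toFinset, Set.Finite.mem_toFinset]
    constructor
    · rintro ⟨⟨h1, h2, h3, _⟩, h5⟩
      exact ⟨h1, h2, h3, h5⟩
    · rintro ⟨h1, h2, h3, h4⟩
      refine ⟨⟨h1, h2, h3, ?_⟩, h4⟩
      have := Polynomial.natDegree_le_of_dvd h4 hfm.ne_zero
      rwa [Polynomial.natDegree_pow, hfd] at this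
  rw [← Finset.sum_congr rfl perf, swap]
  refine Finset.sum_congr rfl ?_
  intro x hx
  rw [Set.Finite.mem_toFinset] at hx
  obtain ⟨hm', hi, hk, hle⟩ := hx
  rw [Finset.sum_const, smul_eq_mul]
  have hdeg : (x.1 ^ x.2).natDegree = x.2 * x.1.natDegree := Polynomial.natDegree_pow _ _
  rw [mul_comm]
  congr 1
  rw [card_multiples (hm'.pow _) (by rw [hdeg]; exact hle), hdeg]

lemma key' (m : ℕ) :
    m * Fintype.card Fq ^ m
      = ∑ j ∈ Finset.range (m + 1), a Fq j * Fintype.card Fq ^ (m - j) := by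
  classical
  rw [key (Fq := Fq) m]
  rw [← Finset.sum_fiberwise_of_maps_to (g := fun x : Fq[X] × ℕ => x.2 * x.1.natDegree)
    (t := Finset.range (m + 1)) (fun x hx => by
      rw [Set.Finite.mem_toFinset] at hx
      exact Finset.mem_range.mpr (Nat.lt_succ_of_le hx.2.2.2))]
  refine Finset.sum_congr rfl ?_
  intro j hj
  rw [Finset.mem_range] at hj
  have hfib : (finite_Qset (Fq := Fq) m).toFinset.filter
      (fun x => x.2 * x.1.natDegree = j) = (finite_Eset (Fq := Fq) j).toFinset := by
    ext x
    rw [Finset.mem_filter, Set.Finite.mem_toFinset, Set.Finite.mem_toFinset]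
    constructor
    · rintro ⟨⟨h1, h2, h3, _⟩, h5⟩
      exact ⟨h1, h2, h3, h5⟩
    · rintro ⟨h1, h2, h3, h4⟩
      exact ⟨⟨h1, h2, h3, h4 ▸ Nat.lt_succ_iff.mp hj⟩, h4⟩
  rw [hfib, a, Finset.sum_mul]
  refine Finset.sum_congr rfl ?_
  intro x hx
  rw [Set.Finite.mem_toFinset] at hx
  rw [hx.2.2.2]

/-- Gauss's identity. -/
lemma a_eq (m : ℕ) (hm : 1 ≤ m) : a Fq m = Fintype.card Fq ^ m := by
  induction m using Nat.strong_induction_on with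
  | _ m ih =>
    obtain ⟨n, rfl⟩ : ∃ n, m = n + 1 := ⟨m - 1, by omega⟩
    have hkey := key' (Fq := Fq) (n + 1)
    rw [Finset.sum_range_succ, Nat.sub_self, pow_zero, mul_one] at hkey
    have hrest : ∑ j ∈ Finset.range (n + 1), a Fq j * Fintype.card Fq ^ (n + 1 - j)
        = n * Fintype.card Fq ^ (n + 1) := by
      rw [Finset.sum_range_succ']
      have h0 : a Fq 0 * Fintype.card Fq ^ (n + 1 - 0) = 0 := by rw [a_zero]; ring
      rw [h0, add_zero]
      have : ∀ i ∈ Finset.range n,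
          a Fq (i + 1) * Fintype.card Fq ^ (n + 1 - (i + 1))
            = Fintype.card Fq ^ (n + 1) := by
        intro i hi
        rw [Finset.mem_range] at hi
        rw [ih (i + 1) (by omega) (by omega), ← pow_add]
        congr 1
        omega
      rw [Finset.sum_congr rfl this, Finset.sum_const, Finset.card_range, smul_eq_mul]
    rw [hrest] at hkey
    have : (n + 1) * Fintype.card Fq ^ (n + 1)
        = n * Fintype.card Fq ^ (n + 1) + Fintype.card Fq ^ (n + 1) := by ring
    omega

/-- The projection sending `(Q, k)` to `(k+1) * deg Q`. -/
def pi (x : {Q : Fq[X] // Q.Monic ∧ Irreducible Q} × ℕ) : ℕ :=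
  (x.2 + 1) * (x.1 : Fq[X]).natDegree

/-- The summand over pairs. -/
noncomputable def F (x : {Q : Fq[X] // Q.Monic ∧ Irreducible Q} × ℕ) : ℝ :=
  (2 * ((x.1 : Fq[X]).natDegree : ℝ)) * ((Fintype.card Fq : ℝ)⁻¹) ^ (2 * pi x)

lemma F_nonneg (x : {Q : Fq[X] // Q.Monic ∧ Irreducible Q} × ℕ) : 0 ≤ F x := by
  unfold F
  positivity

lemma one_lt_q : (1 : ℝ) < (Fintype.card Fq : ℝ) := by
  have : 1 < Fintype.card Fq := Fintype.one_lt_card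
  exact_mod_cast this

lemma q_pos : (0 : ℝ) < (Fintype.card Fq : ℝ) := lt_trans one_pos (one_lt_q (Fq := Fq))

/-- The geometric series over `k` for a fixed `Q`. -/
lemma hasSum_geom (Q : {Q : Fq[X] // Q.Monic ∧ Irreducible Q}) :
    HasSum (fun k => F (Q, k))
      ((2 * ((Q : Fq[X]).natDegree : ℝ))
        / ((Fintype.card Fq : ℝ) ^ (2 * (Q : Fq[X]).natDegree) - 1)) := by
  set q : ℝ := (Fintype.card Fq : ℝ) with hq
  have hq1 : (1 : ℝ) < q := one_lt_q
  have hq0 : (0 : ℝ) < q := q_pos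
  set D : ℕ := (Q : Fq[X]).natDegree with hD
  have hD1 : 1 ≤ D := Q.2.2.natDegree_pos
  set r : ℝ := (q⁻¹) ^ (2 * D) with hr
  have hr0 : 0 ≤ r := by positivity
  have hy1 : 1 < q ^ (2 * D) := one_lt_pow₀ hq1 (by omega)
  have hr1 : r < 1 := by
    rw [hr, inv_pow]
    exact inv_lt_one_of_one_lt₀ hy1
  have h := (hasSum_geometric_of_lt_one hr0 hr1).mul_left ((2 * D : ℝ) * r)
  have hfun : (fun k : ℕ => (2 * D : ℝ) * r * r ^ k) = fun k => F (Q, k) := by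
    funext k
    show (2 * D : ℝ) * r * r ^ k = (2 * (D : ℝ)) * (q⁻¹) ^ (2 * ((k + 1) * D))
    rw [show 2 * ((k + 1) * D) = (2 * D) * (k + 1) by ring, pow_mul, ← hr, pow_succ]
    ring
  rw [hfun] at h
  have hval : (2 * D : ℝ) * r * (1 - r)⁻¹ = (2 * D : ℝ) / (q ^ (2 * D) - 1) := by
    have hy1' : q ^ (2 * D) - 1 ≠ 0 := sub_ne_zero.mpr (ne_of_gt hy1)
    have hy2 : 1 - r ≠ 0 := sub_ne_zero.mpr (ne_of_gt hr1)
    rw [hr, inv_pow] at hy2 ⊢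
    rw [eq_div_iff hy1']
    field_simp
  rwa [hval] at h

/-- The fibers of `pi` biject with `Eset`. -/
noncomputable def fibEquiv (m : ℕ) :
    {x : {Q : Fq[X] // Q.Monic ∧ Irreducible Q} × ℕ // pi x = m}
      ≃ {z : Fq[X] × ℕ // z ∈ (finite_Eset (Fq := Fq) m).toFinset} where
  toFun y := ⟨(y.1.1.1, y.1.2 + 1), by
    rw [Set.Finite.mem_toFinset]
    exact ⟨y.1.1.2.1, y.1.1.2.2, Nat.succ_le_succ (Nat.zero_le _), y.2⟩⟩
  invFun z := ⟨(⟨z.1.1, ((finite_Eset (Fq := Fq) m).mem_toFinset.mp z.2).1,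
      ((finite_Eset (Fq := Fq) m).mem_toFinset.mp z.2).2.1⟩, z.1.2 - 1), by
    have h := (finite_Eset (Fq := Fq) m).mem_toFinset.mp z.2
    show (z.1.2 - 1 + 1) * z.1.1.natDegree = m
    rw [Nat.sub_add_cancel h.2.2.1]
    exact h.2.2.2⟩
  left_inv y := by
    apply Subtype.ext
    apply Prod.ext
    · rfl
    · exact Nat.succ_sub_one _
  right_inv z := by
    apply Subtype.ext
    apply Prod.ext
    · rfl
    · exact Nat.sub_add_cancel ((finite_Eset (Fq := Fq) m).mem_toFinset.mp z.2).2.2.1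

noncomputable instance (m : ℕ) :
    Fintype {x : {Q : Fq[X] // Q.Monic ∧ Irreducible Q} × ℕ // pi x = m} :=
  Fintype.ofEquiv _ (fibEquiv (Fq := Fq) m).symm

/-- Each fiber sums to `2 * a m * q⁻¹ ^ (2m)`. -/
lemma hasSum_fiber (m : ℕ) :
    HasSum (fun y : {x : {Q : Fq[X] // Q.Monic ∧ Irreducible Q} × ℕ // pi x = m} => F y.1)
      (2 * (a Fq m : ℝ) * ((Fintype.card Fq : ℝ)⁻¹) ^ (2 * m)) := by
  set q : ℝ := (Fintype.card Fq : ℝ) with hq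
  have h1 := hasSum_fintype
    (fun y : {x : {Q : Fq[X] // Q.Monic ∧ Irreducible Q} × ℕ // pi x = m} => F y.1)
  have h2 : ∑ y : {x : {Q : Fq[X] // Q.Monic ∧ Irreducible Q} × ℕ // pi x = m}, F y.1
      = 2 * (a Fq m : ℝ) * (q⁻¹) ^ (2 * m) := by
    rw [Fintype.sum_equiv (fibEquiv (Fq := Fq) m) _
      (fun z => ((z.1.1.natDegree : ℝ)) * (2 * (q⁻¹) ^ (2 * m))) ?_]
    · rw [Finset.sum_coe_sort _ (fun z : Fq[X] × ℕ => ((z.1.natDegree : ℝ)) * (2 * (q⁻¹) ^ (2 * m))),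
        ← Finset.sum_mul]
      rw [show ∑ x ∈ (finite_Eset (Fq := Fq) m).toFinset, ((x.1.natDegree : ℕ) : ℝ)
          = ((a Fq m : ℕ) : ℝ) by rw [a]; push_cast; rfl]
      ring
    · intro y
      have hy : (y.1.2 + 1) * (y.1.1 : Fq[X]).natDegree = m := y.2
      have hco : ((fibEquiv (Fq := Fq) m) y).1.1 = (y.1.1 : Fq[X]) := rfl
      show (2 * ((y.1.1 : Fq[X]).natDegree : ℝ)) * (q⁻¹) ^ (2 * ((y.1.2 + 1)
        * (y.1.1 : Fq[X]).natDegree)) = _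
      rw [hy]
      simp only [hco]
      ring
  rw [← h2]
  exact h1

/-- The sum over `m` of the fiber sums. -/
lemma hasSum_S :
    HasSum (fun m : ℕ => 2 * (a Fq m : ℝ) * ((Fintype.card Fq : ℝ)⁻¹) ^ (2 * m))
      (2 / ((Fintype.card Fq : ℝ) - 1)) := by
  set q : ℝ := (Fintype.card Fq : ℝ) with hq
  have hq1 : (1 : ℝ) < q := one_lt_q
  have hq0 : (0 : ℝ) < q := q_pos
  have hqne : q ≠ 0 := ne_of_gt hq0
  have hinv1 : q⁻¹ < 1 := inv_lt_one_of_one_lt₀ hq1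
  have hg : HasSum (fun m : ℕ => 2 * (q⁻¹) ^ m) (2 * (1 - q⁻¹)⁻¹) :=
    (hasSum_geometric_of_lt_one (by positivity) hinv1).mul_left 2
  have hone : HasSum (fun m : ℕ => if m = 0 then (2 : ℝ) else 0) 2 := hasSum_ite_eq 0 2
  have hsub := hg.sub hone
  have hSeq : (fun m : ℕ => 2 * (a Fq m : ℝ) * (q⁻¹) ^ (2 * m))
      = fun m => 2 * (q⁻¹) ^ m - (if m = 0 then (2 : ℝ) else 0) := by
    funext m
    rcases Nat.eq_zero_or_pos m with hm | hm
    · subst hm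
      simp [a_zero]
    · have hm' : m ≠ 0 := Nat.pos_iff_ne_zero.mp hm
      rw [if_neg hm', sub_zero, a_eq m hm]
      push_cast
      rw [inv_pow, inv_pow]
      rw [mul_comm 2 m, pow_mul]
      field_simp
      ring
  have hvalue : 2 * (1 - q⁻¹)⁻¹ - 2 = 2 / (q - 1) := by
    have h1 : q - 1 ≠ 0 := sub_ne_zero.mpr (ne_of_gt hq1)
    have h2 : (1 : ℝ) - q⁻¹ ≠ 0 := sub_ne_zero.mpr (ne_of_gt hinv1)
    field_simp
    ring
  rw [hSeq, ← hvalue]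
  exact hsub

/-- The total sum over all pairs. -/
lemma hasSum_F : HasSum (F (Fq := Fq)) (2 / ((Fintype.card Fq : ℝ) - 1)) := by
  have hGsummable : Summable
      (fun x : (Σ m : ℕ, {x : {Q : Fq[X] // Q.Monic ∧ Irreducible Q} × ℕ // pi x = m}) =>
        F x.2.1) := by
    rw [summable_sigma_of_nonneg (fun x => F_nonneg _)]
    refine ⟨fun m => (hasSum_fiber m).summable, ?_⟩
    refine (hasSum_S (Fq := Fq)).summable.congr fun m => ?_
    exact ((hasSum_fiber m).tsum_eq).symm
  have hGsum : HasSum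
      (fun x : (Σ m : ℕ, {x : {Q : Fq[X] // Q.Monic ∧ Irreducible Q} × ℕ // pi x = m}) =>
        F x.2.1) (2 / ((Fintype.card Fq : ℝ) - 1)) :=
    HasSum.sigma_of_hasSum hasSum_S (fun m => hasSum_fiber m) hGsummable
  exact (Equiv.sigmaFiberEquiv (pi (Fq := Fq))).hasSum_iff.mp hGsum

end EPaux

/-- Euler product identity: `∑ over monic irreducible Q of 2 deg(Q)/(|Q|² - 1) = 2/(q-1)`,
where `|Q| = q^{deg Q}`. -/
theorem sum_over_irreducibles_eq {Fq : Type} [Field Fq] [Fintype Fq] :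
    HasSum (fun Q : {Q : Fq[X] // Q.Monic ∧ Irreducible Q} =>
        (2 * (Q : Fq[X]).natDegree : ℝ)
          / ((Fintype.card Fq : ℝ) ^ (2 * (Q : Fq[X]).natDegree) - 1))
      (2 / ((Fintype.card Fq : ℝ) - 1)) :=
  (EPaux.hasSum_F (Fq := Fq)).prod_fiberwise EPaux.hasSum_geom
end

section
/- Diagonal evaluation: for q odd and any g >= 1, (1/|P_{2g+1}|) sum over P in P_{2g+1} sum over monic f with deg f <= 2X of tau(f) chi_P(f) / sqrt(|f|) = sum over monic f with deg f <= X of tau(f^2)/|f| + O(X^2 q^{-g+X} ) + error, where the first term comes from f a perfect square (writing f = h^2, chi_P(h^2) = 1 for P not dividing h) and the second from the Weil bound applied to nonsquare f. -/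
/-
Split the `f`-sum according to whether `f` is a square. A square `f = h²` with `deg f ≤ 2X` has
`deg h ≤ X < 2g + 1 = deg P`, so `P ∤ h` and `χ_P(f) = 1` for every `P`: the squares contribute
exactly the diagonal `∑ τ(h²)/|h|`, monic square roots being unique. By the Weil bound a non-square
`f` contributes at most `τ(f)/√|f| · C q^{-g} · 2X`. Since `τ(f)` counts the factorisations
`f = ab` and there are at most `q^k` monic polynomials of degree `k`, the total weight
`∑_{deg f ≤ 2X} τ(f)/√|f|` is a double geometric sum in `√q ≥ 3/2`, at most `3(2X + 1) q^X`.
That the `P`-average is an honest average rests on the existence of irreducibles of every degree.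
-/

open Polynomial
open scoped Classical

/-- The quadratic residue character modulo `P`. -/
noncomputable def quadChar {Fq : Type} [Field Fq] (P f : Fq[X]) : ℝ :=
  if P ∣ f then 0
  else if IsSquare (Ideal.Quotient.mk (Ideal.span {P}) f) then 1 else -1

/-- The divisor function on `F_q[x]`. -/
noncomputable def tau {Fq : Type} [Field Fq] (f : Fq[X]) : ℕ :=
  Nat.card {p : Fq[X] × Fq[X] // p.1.Monic ∧ p.2.Monic ∧ p.1 * p.2 = f}

open Finset

theorem geom_sum_le_three_mul_pow {r : ℝ} (hr : 3 / 2 ≤ r) (m : ℕ) :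
    ∑ j ∈ range (m + 1), r ^ j ≤ 3 * r ^ m := by
  induction m with
  | zero => norm_num
  | succ m ih =>
    rw [sum_range_succ, pow_succ]
    nlinarith [mul_nonneg (sub_nonneg.2 hr) (pow_nonneg (by linarith : (0 : ℝ) ≤ r) m)]

theorem Real.sqrt_pow_eq_pow_sqrt {x : ℝ} (hx : 0 ≤ x) (n : ℕ) : √(x ^ n) = √x ^ n := by
  rw [← Real.sqrt_sq (pow_nonneg (Real.sqrt_nonneg x) n), ← pow_mul, mul_comm, pow_mul,
    Real.sq_sqrt hx]

theorem tsum_subtype_eq_sum_of_mem_iff {α : Type*} {p : α → Prop} (s : Finset α)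
    (hs : ∀ x, x ∈ s ↔ p x) (φ : α → ℝ) : ∑' x : {x // p x}, φ x = ∑ x ∈ s, φ x := by
  rw [← Finset.tsum_subtype]
  exact ((Equiv.subtypeEquivRight hs).tsum_eq fun x => φ x).symm

theorem one_div_natCard_mul_tsum_subtype_eq {α : Type*} {p : α → Prop} (s : Finset α)
    (hs : ∀ x, x ∈ s ↔ p x) (φ : α → ℝ) :
    1 / (Nat.card {x // p x} : ℝ) * ∑' x : {x // p x}, φ x = (#s : ℝ)⁻¹ * ∑ x ∈ s, φ x := by
  rw [tsum_subtype_eq_sum_of_mem_iff s hs, one_div, ← Nat.card_eq_finsetCard,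
    Nat.card_congr (Equiv.subtypeEquivRight hs)]

theorem abs_average_sum_sub_sum_filter_le {ι α : Type*} {I : Finset ι} (hI : I.Nonempty)
    (s : Finset α) (p : α → Prop) [DecidablePred p] {w : α → ℝ} (hw : ∀ a ∈ s, 0 ≤ w a)
    (χ : ι → α → ℝ) (hχ : ∀ i ∈ I, ∀ a ∈ s, p a → χ i a = 1) {B : ℝ} (hB0 : 0 ≤ B)
    (hB : ∀ a ∈ s, ¬p a → |(#I : ℝ)⁻¹ * ∑ i ∈ I, χ i a| ≤ B) :
    |(#I : ℝ)⁻¹ * ∑ i ∈ I, ∑ a ∈ s, w a * χ i a - ∑ a ∈ s with p a, w a| ≤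
      B * ∑ a ∈ s, w a := by
  set avg : α → ℝ := fun a => (#I : ℝ)⁻¹ * ∑ i ∈ I, χ i a
  have hswap : (#I : ℝ)⁻¹ * ∑ i ∈ I, ∑ a ∈ s, w a * χ i a = ∑ a ∈ s, w a * avg a := by
    simp only [avg, sum_comm (s := I), mul_sum]
    exact sum_congr rfl fun _ _ => sum_congr rfl fun _ _ => by ring
  have havg : ∀ a ∈ {a ∈ s | p a}, w a * avg a = w a := by
    intro a ha
    obtain ⟨has, hpa⟩ := mem_filter.1 ha
    have hI0 : (#I : ℝ) ≠ 0 := by exact_mod_cast hI.card_pos.ne'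
    simp only [avg, sum_congr rfl fun i hi => hχ i hi a has hpa, sum_const, nsmul_one,
      inv_mul_cancel₀ hI0, mul_one]
  rw [hswap, ← sum_filter_add_sum_filter_not s p, sum_congr rfl havg, add_sub_cancel_left]
  calc |∑ a ∈ s with ¬p a, w a * avg a|
      ≤ ∑ a ∈ s with ¬p a, w a * B := by
        refine (abs_sum_le_sum_abs _ _).trans (sum_le_sum fun a ha => ?_)
        obtain ⟨has, hpa⟩ := mem_filter.1 ha
        rw [abs_mul, abs_of_nonneg (hw a has)]
        exact mul_le_mul_of_nonneg_left (hB a has hpa) (hw a has)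
    _ ≤ ∑ a ∈ s, w a * B :=
        sum_le_sum_of_subset_of_nonneg (filter_subset _ _) fun a ha _ =>
          mul_nonneg (hw a ha) hB0
    _ = B * ∑ a ∈ s, w a := by rw [← sum_mul, mul_comm]

namespace Polynomial

section Semiring

variable {R : Type*} [Semiring R]

theorem injOn_coeff_of_natDegree_le (d : ℕ) :
    Set.InjOn (fun f : R[X] => fun i : Fin (d + 1) => f.coeff i) {f | f.natDegree ≤ d} := by
  intro f hf g hg hfg
  refine (ext_iff_natDegree_le hf hg).2 fun i hi => ?_
  exact congrFun hfg ⟨i, Nat.lt_succ_of_le hi⟩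

theorem injOn_coeff_of_monic_natDegree_eq (k : ℕ) :
    Set.InjOn (fun f : R[X] => fun i : Fin k => f.coeff i) {f | f.Monic ∧ f.natDegree = k} := by
  intro f ⟨hf, hfk⟩ g ⟨hg, hgk⟩ hfg
  refine (ext_iff_natDegree_le hfk.le hgk.le).2 fun i hi => ?_
  rcases hi.lt_or_eq with hi | rfl
  · exact congrFun hfg ⟨i, hi⟩
  · calc f.coeff i = 1 := hfk ▸ hf.coeff_natDegree
      _ = g.coeff i := (hgk ▸ hg.coeff_natDegree).symm

theorem finite_setOf_monic_natDegree_le [Finite R] (d : ℕ) :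
    {f : R[X] | f.Monic ∧ f.natDegree ≤ d}.Finite :=
  Set.Finite.of_finite_image (Set.toFinite _)
    ((injOn_coeff_of_natDegree_le d).mono fun _ hf => hf.2)

variable (R) in
noncomputable def monicsDegLE [Finite R] (d : ℕ) : Finset R[X] :=
  (finite_setOf_monic_natDegree_le d).toFinset

@[simp]
theorem mem_monicsDegLE [Finite R] {d : ℕ} {f : R[X]} :
    f ∈ monicsDegLE R d ↔ f.Monic ∧ f.natDegree ≤ d :=
  Set.Finite.mem_toFinset _

theorem filter_mul_mem_monicsDegLE [Finite R] {d : ℕ} {a : R[X]} (ha : a ∈ monicsDegLE R d) :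
    {b ∈ monicsDegLE R d | a * b ∈ monicsDegLE R d} = monicsDegLE R (d - a.natDegree) := by
  rw [mem_monicsDegLE] at ha
  ext b
  simp only [mem_filter, mem_monicsDegLE]
  constructor
  · rintro ⟨⟨hb, -⟩, -, hab⟩
    rw [ha.1.natDegree_mul hb] at hab
    exact ⟨hb, by omega⟩
  · rintro ⟨hb, hbd⟩
    exact ⟨⟨hb, by omega⟩, ha.1.mul hb, by rw [ha.1.natDegree_mul hb]; omega⟩

theorem card_monicsDegLE_filter_natDegree_eq_le [Fintype R] (d k : ℕ) :
    #{f ∈ monicsDegLE R d | f.natDegree = k} ≤ Fintype.card R ^ k := by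
  have := Finset.card_le_card_of_injOn (s := {f ∈ monicsDegLE R d | f.natDegree = k})
    (t := univ) _ (fun f _ => Finset.mem_univ _)
    ((injOn_coeff_of_monic_natDegree_eq (R := R) k).mono fun f hf => by
      obtain ⟨hfd, hfk⟩ := mem_filter.1 hf
      exact ⟨(mem_monicsDegLE.1 hfd).1, hfk⟩)
  simpa using this

theorem sum_monicsDegLE_le_sum_range [Fintype R] (d : ℕ) {ψ : ℕ → ℝ} (hψ : ∀ j, 0 ≤ ψ j) :
    ∑ f ∈ monicsDegLE R d, ψ f.natDegree ≤
      ∑ j ∈ range (d + 1), (Fintype.card R : ℝ) ^ j * ψ j := by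
  rw [← sum_fiberwise_of_maps_to (g := natDegree) (t := range (d + 1))
    fun f hf => mem_range.2 (Nat.lt_succ_of_le (mem_monicsDegLE.1 hf).2)]
  refine sum_le_sum fun j _ => ?_
  rw [sum_congr rfl fun f hf => by rw [(mem_filter.1 hf).2], sum_const, nsmul_eq_mul]
  gcongr
  · exact hψ j
  · exact_mod_cast card_monicsDegLE_filter_natDegree_eq_le d j

theorem sum_monicsDegLE_inv_pow_le [Fintype R] {r : ℝ} (hr : 3 / 2 ≤ r)
    (hrq : r ^ 2 = Fintype.card R) (m : ℕ) :
    ∑ b ∈ monicsDegLE R m, (r ^ b.natDegree)⁻¹ ≤ 3 * r ^ m := by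
  have hr0 : 0 < r := by linarith
  calc ∑ b ∈ monicsDegLE R m, (r ^ b.natDegree)⁻¹
      ≤ ∑ j ∈ range (m + 1), (Fintype.card R : ℝ) ^ j * (r ^ j)⁻¹ :=
        sum_monicsDegLE_le_sum_range (ψ := fun j => (r ^ j)⁻¹) m fun _ => by positivity
    _ = ∑ j ∈ range (m + 1), r ^ j := by
        refine sum_congr rfl fun j _ => ?_
        rw [← hrq, ← pow_mul, mul_comm 2 j, pow_mul, sq]
        field_simp
    _ ≤ 3 * r ^ m := geom_sum_le_three_mul_pow hr m

end Semiring

section Domain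

variable {R : Type*} [CommRing R] [NoZeroDivisors R]

theorem Monic.eq_of_sq_eq {a b : R[X]} (ha : a.Monic) (hb : b.Monic)
    (h : a ^ 2 = b ^ 2) : a = b := by
  rcases sq_eq_sq_iff_eq_or_eq_neg.1 h with h | h
  · exact h
  · -- `a = -b` forces `1 = -1` on leading coefficients, and then `-b = b`
    have h1 : (1 : R) = -1 := by
      simpa [ha.leadingCoeff, hb.leadingCoeff] using congrArg (·.leadingCoeff) h
    rw [h, neg_eq_neg_one_mul, ← C_1, ← C_neg, ← h1, C_1, one_mul]

theorem Monic.exists_monic_sq_eq {f : R[X]} (hf : f.Monic) (hsq : IsSquare f) :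
    ∃ h : R[X], h.Monic ∧ h ^ 2 = f := by
  obtain ⟨u, rfl⟩ := hsq
  have hlc : u.leadingCoeff * u.leadingCoeff = 1 := by rw [← leadingCoeff_mul]; exact hf
  rcases mul_self_eq_one_iff.1 hlc with h1 | h1
  · exact ⟨u, h1, sq u⟩
  · exact ⟨-u, by rw [Monic, leadingCoeff_neg, h1, neg_neg], by rw [neg_sq, sq]⟩

theorem sum_filter_isSquare_monicsDegLE [Finite R] (d : ℕ) (φ : R[X] → ℝ) :
    ∑ f ∈ monicsDegLE R (2 * d) with IsSquare f, φ f = ∑ h ∈ monicsDegLE R d, φ (h ^ 2) := by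
  have himage : {f ∈ monicsDegLE R (2 * d) | IsSquare f} = (monicsDegLE R d).image (· ^ 2) := by
    ext f
    simp only [mem_filter, mem_image, mem_monicsDegLE]
    constructor
    · rintro ⟨⟨hf, hfd⟩, hsq⟩
      obtain ⟨h, hh, rfl⟩ := hf.exists_monic_sq_eq hsq
      rw [hh.natDegree_pow] at hfd
      exact ⟨h, ⟨hh, by omega⟩, rfl⟩
    · rintro ⟨h, ⟨hh, hhd⟩, rfl⟩
      exact ⟨⟨hh.pow 2, by rw [hh.natDegree_pow]; omega⟩, h, sq h⟩
  rw [himage, sum_image fun a ha b hb hab =>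
    (mem_monicsDegLE.1 ha).1.eq_of_sq_eq (mem_monicsDegLE.1 hb).1 hab]

end Domain

theorem exists_monic_irreducible_natDegree (K : Type*) [Field K] [Finite K] {n : ℕ}
    (hn : n ≠ 0) : ∃ P : K[X], P.Monic ∧ Irreducible P ∧ P.natDegree = n := by
  obtain ⟨p, hp⟩ := CharP.exists K
  have : Fact p.Prime := ⟨CharP.char_is_prime K p⟩
  have : NeZero n := ⟨hn⟩
  obtain ⟨α, hα⟩ := Field.exists_primitive_element_of_finite_top K (FiniteField.Extension K p n)
  have hα_int : IsIntegral K α := .of_finite K α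
  refine ⟨minpoly K α, minpoly.monic hα_int, minpoly.irreducible hα_int, ?_⟩
  rw [← IntermediateField.adjoin.finrank hα_int, hα, IntermediateField.finrank_top',
    FiniteField.finrank_extension]

section FiniteField

variable {K : Type*} [Field K] [Finite K] {n : ℕ}

variable (K n) in
noncomputable def monicIrreducibles : Finset K[X] :=
  {P ∈ monicsDegLE K n | Irreducible P ∧ P.natDegree = n}

theorem mem_monicIrreducibles {P : K[X]} :
    P ∈ monicIrreducibles K n ↔ P.Monic ∧ Irreducible P ∧ P.natDegree = n := by
  simp only [monicIrreducibles, mem_filter, mem_monicsDegLE]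
  exact ⟨fun ⟨⟨hP, _⟩, h⟩ => ⟨hP, h⟩, fun ⟨hP, hirr, hdeg⟩ => ⟨⟨hP, hdeg.le⟩, hirr, hdeg⟩⟩

theorem monicIrreducibles_nonempty (hn : n ≠ 0) : (monicIrreducibles K n).Nonempty :=
  let ⟨P, hP⟩ := exists_monic_irreducible_natDegree K hn
  ⟨P, mem_monicIrreducibles.2 hP⟩

end FiniteField

end Polynomial

section QuadCharTau

variable {K : Type} [Field K]

theorem quadChar_sq_of_not_dvd {P h : K[X]} (hP : Prime P) (hh : ¬P ∣ h) :
    quadChar P (h ^ 2) = 1 := by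
  have hsq : ¬P ∣ h ^ 2 := fun hdvd => hh (hP.dvd_of_dvd_pow hdvd)
  rw [quadChar, if_neg hsq, if_pos ⟨Ideal.Quotient.mk _ h, by rw [map_pow, sq]⟩]

theorem quadChar_eq_one_of_isSquare {P f : K[X]} (hP : Irreducible P) (hf : f.Monic)
    (hsq : IsSquare f) (hdeg : f.natDegree < 2 * P.natDegree) : quadChar P f = 1 := by
  obtain ⟨h, hh, rfl⟩ := hf.exists_monic_sq_eq hsq
  refine quadChar_sq_of_not_dvd hP.prime fun hdvd => ?_
  have := natDegree_le_of_dvd hdvd hh.ne_zero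
  rw [hh.natDegree_pow] at hdeg
  omega

variable [Fintype K]

theorem tau_eq_card {d : ℕ} {f : K[X]} (hf : f ∈ monicsDegLE K d) :
    tau f = #{p ∈ monicsDegLE K d ×ˢ monicsDegLE K d | p.1 * p.2 = f} := by
  rw [tau, ← Nat.card_eq_finsetCard]
  refine Nat.card_congr (Equiv.subtypeEquivRight fun p => ?_)
  simp only [mem_filter, mem_product, mem_monicsDegLE] at hf ⊢
  constructor
  · rintro ⟨h1, h2, rfl⟩
    rw [h1.natDegree_mul h2] at hf
    exact ⟨⟨⟨h1, by omega⟩, h2, by omega⟩, rfl⟩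
  · rintro ⟨⟨⟨h1, -⟩, h2, -⟩, rfl⟩
    exact ⟨h1, h2, rfl⟩

theorem sum_tau_mul_eq_sum_sum (d : ℕ) (φ : K[X] → ℝ) :
    ∑ f ∈ monicsDegLE K d, (tau f : ℝ) * φ f =
      ∑ a ∈ monicsDegLE K d, ∑ b ∈ monicsDegLE K (d - a.natDegree), φ (a * b) := by
  calc ∑ f ∈ monicsDegLE K d, (tau f : ℝ) * φ f
      = ∑ f ∈ monicsDegLE K d, ∑ a ∈ monicsDegLE K d, ∑ b ∈ monicsDegLE K d,
          if a * b = f then φ f else 0 := by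
        refine sum_congr rfl fun f hf => ?_
        rw [tau_eq_card hf, card_filter, sum_product]
        simp only [Nat.cast_sum, sum_mul, Nat.cast_ite, Nat.cast_one, Nat.cast_zero, ite_mul,
          one_mul, zero_mul]
    _ = ∑ a ∈ monicsDegLE K d, ∑ b ∈ monicsDegLE K d,
          if a * b ∈ monicsDegLE K d then φ (a * b) else 0 := by
        rw [sum_comm]
        refine sum_congr rfl fun a _ => ?_
        rw [sum_comm]
        simp only [sum_ite_eq]
    _ = _ := by
        refine sum_congr rfl fun a ha => ?_
        rw [← sum_filter, filter_mul_mem_monicsDegLE ha]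

theorem sum_tau_div_pow_le {r : ℝ} (hr : 3 / 2 ≤ r) (hrq : r ^ 2 = Fintype.card K) (d : ℕ) :
    ∑ f ∈ monicsDegLE K d, (tau f : ℝ) / r ^ f.natDegree ≤ 3 * (d + 1) * r ^ d := by
  have hr0 : 0 < r := by linarith
  calc ∑ f ∈ monicsDegLE K d, (tau f : ℝ) / r ^ f.natDegree
      = ∑ a ∈ monicsDegLE K d, ∑ b ∈ monicsDegLE K (d - a.natDegree),
          (r ^ (a * b).natDegree)⁻¹ := by
        simp_rw [div_eq_mul_inv]
        exact sum_tau_mul_eq_sum_sum d _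
    _ = ∑ a ∈ monicsDegLE K d, (r ^ a.natDegree)⁻¹ *
          ∑ b ∈ monicsDegLE K (d - a.natDegree), (r ^ b.natDegree)⁻¹ := by
        refine sum_congr rfl fun a ha => ?_
        rw [mul_sum]
        refine sum_congr rfl fun b hb => ?_
        rw [(mem_monicsDegLE.1 ha).1.natDegree_mul (mem_monicsDegLE.1 hb).1, pow_add, mul_inv]
    _ ≤ ∑ a ∈ monicsDegLE K d, (r ^ a.natDegree)⁻¹ * (3 * r ^ (d - a.natDegree)) := by
        gcongr with a
        exact sum_monicsDegLE_inv_pow_le hr hrq _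
    _ ≤ ∑ i ∈ range (d + 1), (Fintype.card K : ℝ) ^ i * ((r ^ i)⁻¹ * (3 * r ^ (d - i))) :=
        sum_monicsDegLE_le_sum_range (ψ := fun i => (r ^ i)⁻¹ * (3 * r ^ (d - i))) d
          fun _ => by positivity
    _ = ∑ i ∈ range (d + 1), 3 * r ^ d := by
        refine sum_congr rfl fun i hi => ?_
        rw [← pow_mul_pow_sub r (Nat.le_of_lt_succ (mem_range.1 hi)), ← hrq, ← pow_mul,
          mul_comm 2 i, pow_mul, sq]
        field_simp
    _ = 3 * (d + 1) * r ^ d := by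
        rw [sum_const, card_range, nsmul_eq_mul]
        push_cast
        ring

theorem sum_tau_div_sqrt_le (hq : Odd (Fintype.card K)) (X : ℕ) :
    ∑ f ∈ monicsDegLE K (2 * X), (tau f : ℝ) / √((Fintype.card K : ℝ) ^ f.natDegree) ≤
      3 * (2 * X + 1) * (Fintype.card K : ℝ) ^ X := by
  have hq3 : (3 : ℝ) ≤ Fintype.card K := by
    have := Fintype.one_lt_card (α := K)
    obtain ⟨k, hk⟩ := hq
    exact_mod_cast (show 3 ≤ Fintype.card K by omega)
  have hrq : √(Fintype.card K : ℝ) ^ 2 = Fintype.card K := Real.sq_sqrt (by positivity)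
  have hr : 3 / 2 ≤ √(Fintype.card K : ℝ) := by
    nlinarith [Real.sqrt_nonneg (Fintype.card K : ℝ)]
  simp only [Real.sqrt_pow_eq_pow_sqrt (Nat.cast_nonneg (Fintype.card K))]
  have := sum_tau_div_pow_le hr hrq (2 * X)
  rwa [pow_mul, hrq, Nat.cast_mul, Nat.cast_two] at this

theorem sum_tau_sq_div_eq (X : ℕ) :
    ∑ h ∈ monicsDegLE K X, (tau (h ^ 2) : ℝ) / (Fintype.card K : ℝ) ^ h.natDegree =
      ∑ f ∈ monicsDegLE K (2 * X) with IsSquare f,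
        (tau f : ℝ) / √((Fintype.card K : ℝ) ^ f.natDegree) := by
  rw [sum_filter_isSquare_monicsDegLE]
  refine sum_congr rfl fun h hh => ?_
  rw [(mem_monicsDegLE.1 hh).1.natDegree_pow, pow_mul', Real.sqrt_sq (by positivity)]

theorem abs_average_sub_diagonal_le (hq : Odd (Fintype.card K)) {g X : ℕ} (hXg : X ≤ g)
    {B : ℝ} (hB0 : 0 ≤ B)
    (hweil : ∀ f ∈ monicsDegLE K (2 * X), ¬IsSquare f →
      |(#(monicIrreducibles K (2 * g + 1)) : ℝ)⁻¹ *
        ∑ P ∈ monicIrreducibles K (2 * g + 1), quadChar P f| ≤ B) :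
    |(#(monicIrreducibles K (2 * g + 1)) : ℝ)⁻¹ *
        ∑ P ∈ monicIrreducibles K (2 * g + 1), ∑ f ∈ monicsDegLE K (2 * X),
          (tau f : ℝ) * quadChar P f / √((Fintype.card K : ℝ) ^ f.natDegree) -
      ∑ h ∈ monicsDegLE K X, (tau (h ^ 2) : ℝ) / (Fintype.card K : ℝ) ^ h.natDegree| ≤
      B * (3 * (2 * X + 1) * (Fintype.card K : ℝ) ^ X) := by
  have hsquares : ∀ P ∈ monicIrreducibles K (2 * g + 1), ∀ f ∈ monicsDegLE K (2 * X),
      IsSquare f → quadChar P f = 1 := by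
    intro P hP f hf hsq
    obtain ⟨-, hirr, hPd⟩ := mem_monicIrreducibles.1 hP
    obtain ⟨hfm, hfd⟩ := mem_monicsDegLE.1 hf
    exact quadChar_eq_one_of_isSquare hirr hfm hsq (by omega)
  simp only [mul_div_right_comm _ (quadChar _ _), sum_tau_sq_div_eq]
  calc _ ≤ B * ∑ f ∈ monicsDegLE K (2 * X), (tau f : ℝ) / √((Fintype.card K : ℝ) ^ f.natDegree) :=
        abs_average_sum_sub_sum_filter_le (monicIrreducibles_nonempty (by omega)) _ IsSquare
          (fun _ _ => by positivity) quadChar hsquares hB0 hweil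
    _ ≤ B * (3 * (2 * X + 1) * (Fintype.card K : ℝ) ^ X) := by
        gcongr
        exact sum_tau_div_sqrt_le hq X

end QuadCharTau

/-- Diagonal evaluation: assuming the Weil-type bound for nonsquare `f`, the average over
monic irreducible `P` of degree `2g+1` of `∑_{f monic, deg f ≤ 2X} τ(f) χ_P(f)/√|f|` equals
the diagonal `∑_{f monic, deg f ≤ X} τ(f²)/|f|` up to an error `O(X² q^{X-g})`. -/
theorem diagonal_evaluation {Fq : Type} [Field Fq] [Fintype Fq]
    (hq : Odd (Fintype.card Fq)) (C : ℝ) (hC : 0 < C)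
    (hWeil : ∀ (g : ℕ) (f : Fq[X]), f.Monic → ¬IsSquare f →
      |(1 / (Nat.card {P : Fq[X] // P.Monic ∧ Irreducible P ∧ P.natDegree = 2 * g + 1} : ℝ))
          * ∑' P : {P : Fq[X] // P.Monic ∧ Irreducible P ∧ P.natDegree = 2 * g + 1},
              quadChar (P : Fq[X]) f|
        ≤ C * (Fintype.card Fq : ℝ) ^ (-(g : ℤ)) * (f.natDegree : ℝ)) :
    ∃ D : ℝ, ∀ g X : ℕ, 1 ≤ X → X ≤ g →
      |(1 / (Nat.card {P : Fq[X] // P.Monic ∧ Irreducible P ∧ P.natDegree = 2 * g + 1} : ℝ))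
            * ∑' P : {P : Fq[X] // P.Monic ∧ Irreducible P ∧ P.natDegree = 2 * g + 1},
                ∑' f : {f : Fq[X] // f.Monic ∧ f.natDegree ≤ 2 * X},
                  (tau (f : Fq[X]) : ℝ) * quadChar (P : Fq[X]) (f : Fq[X])
                    / Real.sqrt ((Fintype.card Fq : ℝ) ^ (f : Fq[X]).natDegree)
          - ∑' f : {f : Fq[X] // f.Monic ∧ f.natDegree ≤ X},
              (tau ((f : Fq[X]) ^ 2) : ℝ) / (Fintype.card Fq : ℝ) ^ (f : Fq[X]).natDegree|
        ≤ D * (X : ℝ) ^ 2 * (Fintype.card Fq : ℝ) ^ ((X : ℤ) - (g : ℤ)) := by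
  refine ⟨18 * C, fun g X hX hXg => ?_⟩
  set q : ℝ := (Fintype.card Fq : ℝ)
  -- the summands are spelled out: `rw` cannot abstract them from under the coercions `↑P`, `↑f`
  rw [one_div_natCard_mul_tsum_subtype_eq _ (fun _ => mem_monicIrreducibles) fun P =>
      ∑' f : {f : Fq[X] // f.Monic ∧ f.natDegree ≤ 2 * X},
        (tau (f : Fq[X]) : ℝ) * quadChar P (f : Fq[X]) / √(q ^ (f : Fq[X]).natDegree),
    tsum_subtype_eq_sum_of_mem_iff _ (fun _ => mem_monicsDegLE) fun h =>
      (tau (h ^ 2) : ℝ) / q ^ h.natDegree,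
    sum_congr rfl fun P _ => tsum_subtype_eq_sum_of_mem_iff _ (fun _ => mem_monicsDegLE) fun f =>
      (tau f : ℝ) * quadChar P f / √(q ^ f.natDegree)]
  have hweil (f : Fq[X]) (hf : f ∈ monicsDegLE Fq (2 * X)) (hns : ¬IsSquare f) :
      |(#(monicIrreducibles Fq (2 * g + 1)) : ℝ)⁻¹ *
        ∑ P ∈ monicIrreducibles Fq (2 * g + 1), quadChar P f| ≤ C * q ^ (-(g : ℤ)) * (2 * X) := by
    obtain ⟨hfm, hfd⟩ := mem_monicsDegLE.1 hf
    have := hWeil g f hfm hns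
    rw [one_div_natCard_mul_tsum_subtype_eq _ (fun _ => mem_monicIrreducibles) fun P =>
      quadChar P f] at this
    exact this.trans (by gcongr; exact_mod_cast hfd)
  have hpow : q ^ (-(g : ℤ)) * q ^ X = q ^ ((X : ℤ) - g) := by
    rw [← zpow_natCast, ← zpow_add₀ (by positivity)]
    ring_nf
  calc _ ≤ C * q ^ (-(g : ℤ)) * (2 * X) * (3 * (2 * X + 1) * q ^ X) :=
        abs_average_sub_diagonal_le hq hXg (by positivity) hweil
    _ = C * q ^ ((X : ℤ) - g) * (6 * X * (2 * X + 1)) := by rw [← hpow]; ring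
    _ ≤ C * q ^ ((X : ℤ) - g) * (18 * X ^ 2) := by
        refine mul_le_mul_of_nonneg_left ?_ (by positivity)
        nlinarith [(Nat.one_le_cast (α := ℝ)).2 hX]
    _ = 18 * C * X ^ 2 * q ^ ((X : ℤ) - g) := by ring
end
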